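/- Let F be a finitely generated free ℤ-module with a symmetric bilinear form B : F × F → ℤ that is unimodular (the induced map F → Hom(F, ℤ) is an isomorphism). If t ∈ F satisfies B(t, t) = 0 and t is primitive (i.e., t = d·x implies d = ±1 for d ∈ ℤ, x ∈ F), then there exists s ∈ F with B(s, t) = 1. -/

import Mathlib

/-!
The values `f t` of the functionals `f` on `t` form an ideal of `ℤ`, generated by some `g`.
Every coordinate of `t` in a basis is such a value, hence divisible by `g`, so `t = g • x`.
Primitivity forces `g = ±1`, which gives a functional taking the value `1` at `t`, and
unimodularity writes that functional as `B s`.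
-/

section

variable {R M : Type*} [CommRing R] [IsPrincipalIdealRing R] [AddCommGroup M] [Module R M]
  [Module.Free R M] [Module.Finite R M]

theorem Module.exists_dual_apply_eq_and_eq_smul (t : M) :
    ∃ (g : R) (f : Module.Dual R M) (x : M), f t = g ∧ t = g • x := by
  let b := Module.Free.chooseBasis R M
  set I : Ideal R := LinearMap.range (LinearMap.applyₗ t : Module.Dual R M →ₗ[R] R)
  obtain ⟨g, hg⟩ := IsPrincipalIdealRing.principal I
  obtain ⟨f, hf⟩ : g ∈ I := hg ▸ Submodule.mem_span_singleton_self g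
  have hdvd : ∀ i, g ∣ b.repr t i := fun i => by
    have hmem : b.repr t i ∈ I := ⟨b.coord i, rfl⟩
    rwa [hg, Ideal.submodule_span_eq, Ideal.mem_span_singleton] at hmem
  choose c hc using hdvd
  refine ⟨g, f, b.equivFun.symm c, hf, b.ext_elem fun i => ?_⟩
  rw [map_smul, Finsupp.smul_apply, hc, ← b.equivFun_apply, b.equivFun.apply_symm_apply,
    smul_eq_mul]

theorem Module.exists_dual_apply_eq_one_of_forall_eq_smul_isUnit {t : M}
    (ht : ∀ (d : R) (x : M), t = d • x → IsUnit d) : ∃ f : Module.Dual R M, f t = 1 := by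
  obtain ⟨g, f, x, hf, htx⟩ := Module.exists_dual_apply_eq_and_eq_smul (R := R) t
  obtain ⟨u, rfl⟩ := ht g x htx
  exact ⟨(↑u⁻¹ : R) • f, by simp [hf]⟩

end

theorem stmt_0_general (F : Type*) [AddCommGroup F] [Module ℤ F]
    [Module.Free ℤ F] [Module.Finite ℤ F]
    (B : F →ₗ[ℤ] F →ₗ[ℤ] ℤ)
    (huni : Function.Bijective B)
    (t : F)
    (hprim : ∀ (d : ℤ) (x : F), t = d • x → d = 1 ∨ d = -1) :
    ∃ s : F, B s t = 1 := by
  -- `hprim` is stated with the `zsmul` of `AddCommGroup F`, not the smul of `Module ℤ F`.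
  obtain ⟨f, hf⟩ := Module.exists_dual_apply_eq_one_of_forall_eq_smul_isUnit (t := t)
    fun d x h => Int.isUnit_iff.mpr (hprim d x (h.trans (int_smul_eq_zsmul _ d x)))
  obtain ⟨s, rfl⟩ := huni.surjective f
  exact ⟨s, hf⟩

/-- A unimodular symmetric bilinear form on a finitely generated free ℤ-module:
if `t` is isotropic and primitive, then some `s` pairs with `t` to `1`. -/
theorem stmt_0 (F : Type*) [AddCommGroup F] [Module ℤ F]
    [Module.Free ℤ F] [Module.Finite ℤ F]
    (B : F →ₗ[ℤ] F →ₗ[ℤ] ℤ)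
    (hsymm : ∀ x y : F, B x y = B y x)
    (huni : Function.Bijective B)
    (t : F)
    (hiso : B t t = 0)
    (hprim : ∀ (d : ℤ) (x : F), t = d • x → d = 1 ∨ d = -1) :
    ∃ s : F, B s t = 1 :=
  stmt_0_general F B huni t hprim
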